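/- arXiv:0710.0080 — 3 statements merged into one kernel-verified Lean document; each statement's English description precedes it below -/
import Mathlib

section
/- If d^φ(x,y) = 0 then x = y. -/
/-- δ^φ(x,y) = min{d(x,y), 1/(1+d(m,x)) + φ(x,y) + 1/(1+d(m,y))}. -/
noncomputable def deltaPhi {X : Type*} [MetricSpace X] (m : X) (φ : X → X → ℝ) (x y : X) : ℝ :=
  min (dist x y) (1 / (1 + dist m x) + φ x y + 1 / (1 + dist m y))

/-- d^φ(x,y): infimum over finite chains x = x₀, ..., xₙ = y of Σ δ^φ(x_{i-1}, x_i). -/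
noncomputable def dPhi {X : Type*} [MetricSpace X] (m : X) (φ : X → X → ℝ) (x y : X) : ℝ :=
  sInf { r : ℝ | ∃ (n : ℕ) (f : ℕ → X), 1 ≤ n ∧ f 0 = x ∧ f n = y ∧
    r = ∑ i ∈ Finset.range n, deltaPhi m φ (f i) (f (i + 1)) }

/-!
Each step of a chain costs at least `min (d(a, b)) (1 / (1 + d(m, a)))`, because `φ ≥ 0`.
Since `t ↦ 1 / (1 + d(m, t))` is `1`-Lipschitz, this truncated distance still satisfies the triangle
inequality, so every chain from `x` to `y` costs at least `min (d(x, y)) (1 / (1 + d(m, x)))`,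
which is positive when `x ≠ y`.
-/

open Finset

theorem le_sum_range_of_triangle {X : Type*} (g : X → X → ℝ) (hself : ∀ x, g x x ≤ 0)
    (htri : ∀ x y z, g x z ≤ g x y + g y z) (f : ℕ → X) (n : ℕ) :
    g (f 0) (f n) ≤ ∑ i ∈ range n, g (f i) (f (i + 1)) := by
  induction n with
  | zero => simpa using hself (f 0)
  | succ n ih =>
    rw [sum_range_succ]
    exact (htri _ (f n) _).trans (by gcongr)

theorem min_dist_le_add_min_dist {X : Type*} [PseudoMetricSpace X] {c : X → ℝ}
    (hc : ∀ x, 0 ≤ c x) (hlip : ∀ x y, c x ≤ c y + dist x y) (x y z : X) :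
    min (dist x z) (c x) ≤ min (dist x y) (c x) + min (dist y z) (c y) := by
  have hyz : 0 ≤ min (dist y z) (c y) := le_min dist_nonneg (hc y)
  rcases min_cases (dist x y) (c x) with ⟨hxy, -⟩ | ⟨hxy, -⟩
  · rw [hxy]
    rcases min_cases (dist y z) (c y) with ⟨hyz', -⟩ | ⟨hyz', -⟩
    · rw [hyz']
      exact (min_le_left _ _).trans ((dist_triangle x y z).trans_eq (by ring))
    · rw [hyz']
      exact (min_le_right _ _).trans ((hlip x y).trans_eq (add_comm _ _))
  · rw [hxy]
    linarith [min_le_right (dist x z) (c x)]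

theorem one_div_one_add_dist_le {X : Type*} [PseudoMetricSpace X] (m x y : X) :
    1 / (1 + dist m x) ≤ 1 / (1 + dist m y) + dist x y := by
  have hmy : dist m y ≤ dist m x + dist x y := dist_triangle m x y
  have hx : 0 ≤ dist m x := dist_nonneg
  have hy : 0 ≤ dist m y := dist_nonneg
  have hxy : 0 ≤ dist x y := dist_nonneg
  rw [div_add' _ _ _ (by positivity), div_le_div_iff₀ (by positivity) (by positivity)]
  nlinarith [mul_nonneg hxy hx, mul_nonneg hxy hy, mul_nonneg (mul_nonneg hxy hx) hy]

theorem min_dist_le_deltaPhi {X : Type*} [MetricSpace X] (m : X) {φ : X → X → ℝ} {x y : X}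
    (hφ : 0 ≤ φ x y) : min (dist x y) (1 / (1 + dist m x)) ≤ deltaPhi m φ x y := by
  have hy : 0 ≤ 1 / (1 + dist m y) := by positivity
  exact le_min (min_le_left _ _) ((min_le_right _ _).trans (by linarith))

theorem min_dist_le_dPhi {X : Type*} [MetricSpace X] (m : X) {φ : X → X → ℝ}
    (hφ : ∀ x y, 0 ≤ φ x y) (x y : X) :
    min (dist x y) (1 / (1 + dist m x)) ≤ dPhi m φ x y := by
  refine le_csInf ⟨_, 1, fun i => if i = 0 then x else y, le_rfl, rfl, rfl, rfl⟩ ?_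
  rintro r ⟨n, f, -, rfl, rfl, rfl⟩
  refine (le_sum_range_of_triangle (fun a b => min (dist a b) (1 / (1 + dist m a)))
    (fun a => by simp) (min_dist_le_add_min_dist (fun a => by positivity)
      (one_div_one_add_dist_le m)) f n).trans ?_
  exact sum_le_sum fun i _ => min_dist_le_deltaPhi m (hφ _ _)

theorem stmt2_general {X : Type*} [MetricSpace X] (m : X) (φ : X → X → ℝ)
    (hφ : ∀ x y, 0 ≤ φ x y)
    (x y : X) (h : dPhi m φ x y = 0) : x = y := by
  by_contra hxy
  have hpos : 0 < min (dist x y) (1 / (1 + dist m x)) :=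
    lt_min (dist_pos.2 hxy) (by positivity)
  linarith [min_dist_le_dPhi m hφ x y]

theorem stmt2 {X : Type*} [MetricSpace X] (m : X) (φ : X → X → ℝ)
    (hφ : ∀ x y, 0 ≤ φ x y) (hsym : ∀ x y, φ x y = φ y x)
    (x y : X) (h : dPhi m φ x y = 0) : x = y :=
  stmt2_general m φ hφ x y h
end

section
/- d^φ is a metric on X. -/
open Finset

section ChainSums

variable {X : Type*}

def chainSums (δ : X → X → ℝ) (x y : X) : Set ℝ :=
  { r | ∃ (n : ℕ) (f : ℕ → X), 1 ≤ n ∧ f 0 = x ∧ f n = y ∧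
    r = ∑ i ∈ range n, δ (f i) (f (i + 1)) }

variable (δ : X → X → ℝ)

lemma self_mem_chainSums (x y : X) : δ x y ∈ chainSums δ x y :=
  ⟨1, fun i => if i = 0 then x else y, le_rfl, by simp, by simp, by simp⟩

lemma chainSums_nonempty (x y : X) : (chainSums δ x y).Nonempty :=
  ⟨_, self_mem_chainSums δ x y⟩

lemma nonneg_of_mem_chainSums (hδ : ∀ x y, 0 ≤ δ x y) {x y : X} {r : ℝ}
    (hr : r ∈ chainSums δ x y) : 0 ≤ r := by
  obtain ⟨n, f, -, -, -, rfl⟩ := hr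
  exact sum_nonneg fun i _ => hδ _ _

lemma chainSums_bddBelow (hδ : ∀ x y, 0 ≤ δ x y) (x y : X) : BddBelow (chainSums δ x y) :=
  ⟨0, fun _ => nonneg_of_mem_chainSums δ hδ⟩

lemma mem_chainSums_swap (hδ : ∀ x y, δ x y = δ y x) {x y : X} {r : ℝ}
    (hr : r ∈ chainSums δ x y) : r ∈ chainSums δ y x := by
  obtain ⟨n, f, hn, hf0, hfn, rfl⟩ := hr
  refine ⟨n, fun i => f (n - i), hn, by simpa using hfn, by simpa using hf0, ?_⟩
  rw [← sum_range_reflect]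
  refine sum_congr rfl fun i hi => ?_
  have hi : i < n := mem_range.mp hi
  dsimp only
  rw [hδ, show n - 1 - i + 1 = n - i by omega, show n - 1 - i = n - (i + 1) by omega]

lemma add_mem_chainSums {x y z : X} {a b : ℝ} (ha : a ∈ chainSums δ x y)
    (hb : b ∈ chainSums δ y z) : a + b ∈ chainSums δ x z := by
  obtain ⟨n, f, hn, hf0, hfn, rfl⟩ := ha
  obtain ⟨k, g, -, hg0, hgk, rfl⟩ := hb
  set F : ℕ → X := fun i => if i ≤ n then f i else g (i - n) with hF
  have hleft : ∀ i ≤ n, F i = f i := fun i hi => if_pos hi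
  have hright : ∀ j, F (n + j) = g j := by
    rintro (_ | j)
    · simp [hF, hfn, hg0]
    · simp [hF]
  refine ⟨n + k, F, by omega, by rw [hleft 0 n.zero_le, hf0], by rw [hright, hgk], ?_⟩
  rw [sum_range_add]
  congr 1
  · refine sum_congr rfl fun i hi => ?_
    have hi : i < n := mem_range.mp hi
    rw [hleft i hi.le, hleft (i + 1) hi]
  · exact sum_congr rfl fun j _ => by rw [add_assoc, hright, hright]

lemma le_of_mem_chainSums {ρ : X → X → ℝ} (hρ0 : ∀ x, ρ x x = 0)
    (hρ : ∀ x y z, ρ x z ≤ ρ x y + ρ y z) (hle : ∀ x y, ρ x y ≤ δ x y) {x y : X} {r : ℝ}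
    (hr : r ∈ chainSums δ x y) : ρ x y ≤ r := by
  obtain ⟨n, f, -, rfl, rfl, rfl⟩ := hr
  induction n with
  | zero => simp [hρ0]
  | succ n ih =>
    rw [sum_range_succ]
    linarith [hρ (f 0) (f n) (f (n + 1)), hle (f n) (f (n + 1))]

lemma le_sInf_chainSums {ρ : X → X → ℝ} (hρ0 : ∀ x, ρ x x = 0)
    (hρ : ∀ x y z, ρ x z ≤ ρ x y + ρ y z) (hle : ∀ x y, ρ x y ≤ δ x y) (x y : X) :
    ρ x y ≤ sInf (chainSums δ x y) :=
  le_csInf (chainSums_nonempty δ x y) fun _ => le_of_mem_chainSums δ hρ0 hρ hle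

variable (hδ : ∀ x y, 0 ≤ δ x y)
include hδ

lemma sInf_chainSums_nonneg (x y : X) : 0 ≤ sInf (chainSums δ x y) :=
  le_csInf (chainSums_nonempty δ x y) fun _ => nonneg_of_mem_chainSums δ hδ

lemma sInf_chainSums_le (x y : X) : sInf (chainSums δ x y) ≤ δ x y :=
  csInf_le (chainSums_bddBelow δ hδ x y) (self_mem_chainSums δ x y)

lemma sInf_chainSums_comm (hsymm : ∀ x y, δ x y = δ y x) (x y : X) :
    sInf (chainSums δ x y) = sInf (chainSums δ y x) := by
  have key : ∀ x y, sInf (chainSums δ x y) ≤ sInf (chainSums δ y x) := fun x y =>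
    le_csInf (chainSums_nonempty δ y x) fun _ hr =>
      csInf_le (chainSums_bddBelow δ hδ x y) (mem_chainSums_swap δ hsymm hr)
  exact le_antisymm (key x y) (key y x)

lemma sInf_chainSums_triangle (x y z : X) :
    sInf (chainSums δ x z) ≤ sInf (chainSums δ x y) + sInf (chainSums δ y z) := by
  refine le_of_forall_pos_le_add fun ε hε => ?_
  obtain ⟨a, ha, ha_lt⟩ := Real.lt_sInf_add_pos (chainSums_nonempty δ x y) (half_pos hε)
  obtain ⟨b, hb, hb_lt⟩ := Real.lt_sInf_add_pos (chainSums_nonempty δ y z) (half_pos hε)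
  have := csInf_le (chainSums_bddBelow δ hδ x z) (add_mem_chainSums δ ha hb)
  linarith

end ChainSums

section Weight

variable {X : Type*} [MetricSpace X] (m : X)

noncomputable def weight (x : X) : ℝ := 1 / (1 + dist m x)

lemma weight_pos (x : X) : 0 < weight m x := by
  unfold weight
  positivity

lemma weight_le_weight_add_dist (x y : X) : weight m x ≤ weight m y + dist x y := by
  have hx : 0 ≤ dist m x := dist_nonneg
  have hy : 0 ≤ dist m y := dist_nonneg
  have hxy : 0 ≤ dist x y := dist_nonneg
  have htri : dist m y ≤ dist m x + dist x y := dist_triangle m x y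
  unfold weight
  rw [div_add' _ _ _ (by positivity), div_le_div_iff₀ (by positivity) (by positivity)]
  nlinarith [mul_nonneg hxy hx, mul_nonneg hxy hy, mul_nonneg (mul_nonneg hxy hx) hy]

noncomputable def weightedMinDist (x y : X) : ℝ := min (dist x y) (weight m x + weight m y)

lemma weightedMinDist_self (x : X) : weightedMinDist m x x = 0 :=
  le_antisymm ((min_le_left _ _).trans_eq (dist_self x))
    (le_min dist_nonneg (by linarith [weight_pos m x]))

lemma weightedMinDist_pos {x y : X} (h : x ≠ y) : 0 < weightedMinDist m x y :=
  lt_min (dist_pos.mpr h) (by linarith [weight_pos m x, weight_pos m y])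

lemma weightedMinDist_triangle (x y z : X) :
    weightedMinDist m x z ≤ weightedMinDist m x y + weightedMinDist m y z := by
  have hxz := dist_triangle x y z
  have hx := weight_le_weight_add_dist m x y
  have hz := weight_le_weight_add_dist m z y
  have hy := weight_pos m y
  rw [dist_comm z y] at hz
  unfold weightedMinDist
  rcases min_choice (dist x y) (weight m x + weight m y) with h1 | h1 <;>
    rcases min_choice (dist y z) (weight m y + weight m z) with h2 | h2 <;>
    rw [h1, h2]
  · exact (min_le_left _ _).trans hxz
  all_goals exact (min_le_right _ _).trans (by linarith)

variable (φ : X → X → ℝ)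

lemma deltaPhi_eq (x y : X) :
    deltaPhi m φ x y = min (dist x y) (weight m x + φ x y + weight m y) := rfl

lemma deltaPhi_comm (hsymm : ∀ x y, φ x y = φ y x) (x y : X) :
    deltaPhi m φ x y = deltaPhi m φ y x := by
  rw [deltaPhi_eq, deltaPhi_eq, dist_comm, hsymm]
  congr 1
  ring

variable {φ} (hφ : ∀ x y, 0 ≤ φ x y)
include hφ

lemma weightedMinDist_le_deltaPhi (x y : X) : weightedMinDist m x y ≤ deltaPhi m φ x y := by
  rw [deltaPhi_eq]
  exact min_le_min le_rfl (by linarith [hφ x y])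

lemma deltaPhi_nonneg (x y : X) : 0 ≤ deltaPhi m φ x y :=
  (le_min dist_nonneg (by linarith [weight_pos m x, weight_pos m y])).trans
    (weightedMinDist_le_deltaPhi m hφ x y)

end Weight

/-- d^φ is a metric on X: nonnegative, vanishing exactly on the diagonal,
symmetric, and satisfying the triangle inequality. -/
theorem stmt5 {X : Type*} [MetricSpace X] (m : X) (φ : X → X → ℝ)
    (hφ : ∀ x y, 0 ≤ φ x y) (hsym : ∀ x y, φ x y = φ y x) :
    (∀ x y, 0 ≤ dPhi m φ x y) ∧
    (∀ x y, dPhi m φ x y = 0 ↔ x = y) ∧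
    (∀ x y, dPhi m φ x y = dPhi m φ y x) ∧
    (∀ x y z, dPhi m φ x z ≤ dPhi m φ x y + dPhi m φ y z) := by
  have hδ := deltaPhi_nonneg m hφ
  have hdPhi : ∀ x y, dPhi m φ x y = sInf (chainSums (deltaPhi m φ) x y) := fun _ _ => rfl
  simp only [hdPhi]
  refine ⟨sInf_chainSums_nonneg _ hδ, fun x y => ⟨fun h => ?_, ?_⟩,
    sInf_chainSums_comm _ hδ (deltaPhi_comm m φ hsym), sInf_chainSums_triangle _ hδ⟩
  · by_contra hne
    have hle := le_sInf_chainSums _ (weightedMinDist_self m) (weightedMinDist_triangle m)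
      (weightedMinDist_le_deltaPhi m hφ) x y
    linarith [weightedMinDist_pos m hne]
  · rintro rfl
    refine le_antisymm ((sInf_chainSums_le _ hδ x x).trans ?_) (sInf_chainSums_nonneg _ hδ x x)
    exact (min_le_left _ _).trans_eq (dist_self x)
end

section
/- Let aₘ = Σₖ₌₁ᵐ 1/k and 0 < δ < π/4. Suppose x ∈ ℝˢ satisfies aₘ ≤ |x| < a_{m+1}, and y is the intersection of the sphere of radius aₘ with the ray in the family L passing through x. Then |y − x| ≤ (1/cos δ)·(1/(m+1)) ≤ √2/(m+1). -/
/-- aₘ = 1 + 1/2 + ⋯ + 1/m. -/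
noncomputable def harm (m : ℕ) : ℝ := ∑ k ∈ Finset.range m, (1 : ℝ) / (k + 1)

-- The function φ for the standard compactification of ℝˢ:
-- φ(x,y) = 0 if y = (a_q/a_p) x for some p,q ≥ 1; φ(x,y) = (1/aₘ)|x−y| if x,y
-- lie on the sphere Sₘ of radius aₘ (note ‖x‖ = aₘ there); |x−y| otherwise.
open Classical in
noncomputable def phiStd (s : ℕ) (x y : EuclideanSpace ℝ (Fin s)) : ℝ :=
  if ∃ p q : ℕ, 1 ≤ p ∧ 1 ≤ q ∧ y = (harm q / harm p) • x then 0
  else if ∃ m : ℕ, 1 ≤ m ∧ ‖x‖ = harm m ∧ ‖y‖ = harm m then (1 / ‖x‖) * ‖x - y‖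
  else ‖x - y‖
-- The first standard basis vector a₁ = (1,0,…,0) of ℝˢ.
noncomputable def e1 (s : ℕ) : EuclideanSpace ℝ (Fin s) :=
  if h : 0 < s then EuclideanSpace.single (⟨0, h⟩ : Fin s) 1 else 0

-- The direction of the bent ray L_x (bending construction with parameter δ):
-- a₁ if ∠(x,a₁) ≤ δ; −a₁ if ∠(x,−a₁) ≤ δ; otherwise the unit vector in
-- span{a₁, x}, on the same side of the a₁-axis as x, making angle
-- θ = (π/(π−2δ))(∠(x,a₁) − δ) with a₁.
open Classical in
noncomputable def rayDir (s : ℕ) (δ : ℝ) (x : EuclideanSpace ℝ (Fin s)) :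
    EuclideanSpace ℝ (Fin s) :=
  if InnerProductGeometry.angle x (e1 s) ≤ δ then e1 s
  else if InnerProductGeometry.angle x (-(e1 s)) ≤ δ then -(e1 s)
  else
    Real.cos ((Real.pi / (Real.pi - 2 * δ)) * (InnerProductGeometry.angle x (e1 s) - δ)) • e1 s
      + Real.sin ((Real.pi / (Real.pi - 2 * δ)) * (InnerProductGeometry.angle x (e1 s) - δ)) •
        (‖x - (inner ℝ x (e1 s) : ℝ) • e1 s‖⁻¹ • (x - (inner ℝ x (e1 s) : ℝ) • e1 s))

-- The ray L_x starting at the unit vector x, from the bending construction.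
def ray (s : ℕ) (δ : ℝ) (x : EuclideanSpace ℝ (Fin s)) : Set (EuclideanSpace ℝ (Fin s)) :=
  { y | ∃ t : ℝ, 0 ≤ t ∧ y = x + t • rayDir s δ x }

-- d_E(A,B) = inf{|a−b| : a ∈ A, b ∈ B}.
noncomputable def setDist {E : Type*} [MetricSpace E] (A B : Set E) : ℝ :=
  sInf { r : ℝ | ∃ a ∈ A, ∃ b ∈ B, r = dist a b }

/-!
The direction of the bent ray `L_{x'}` makes an angle at most `δ` with the radial direction `x'`,
so along the ray the norm grows at rate at least `cos δ`. Between `y` and `x` the norm grows by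
less than `a_{m+1} - a_m = 1/(m+1)`, hence `|y - x| ≤ 1/((m+1) cos δ)`, and
`cos δ ≥ cos (π/4) = 1/√2`.
-/

section Bending

open Real RealInnerProductSpace InnerProductGeometry

variable {E : Type*} [NormedAddCommGroup E] [InnerProductSpace ℝ E]

lemma cos_le_inner_of_angle_le {x v : E} (hx : ‖x‖ = 1) (hv : ‖v‖ = 1) {δ : ℝ}
    (hδ : δ ≤ π) (h : angle x v ≤ δ) : cos δ ≤ ⟪x, v⟫ := by
  have := cos_le_cos_of_nonneg_of_le_pi (angle_nonneg x v) hδ h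
  rwa [cos_angle, hx, hv, one_mul, div_one] at this

noncomputable def unitRejection (e x : E) : E :=
  ‖x - ⟪x, e⟫ • e‖⁻¹ • (x - ⟪x, e⟫ • e)

variable {x e : E}

lemma inner_unitRejection_left (he : ‖e‖ = 1) : ⟪e, unitRejection e x⟫ = 0 := by
  have hee : ⟪e, e⟫ = 1 := by rw [real_inner_self_eq_norm_sq, he, one_pow]
  rw [unitRejection, real_inner_smul_right, inner_sub_right, real_inner_smul_right, hee,
    real_inner_comm, mul_one, sub_self, mul_zero]

lemma norm_sub_inner_smul_eq_sin_angle (hx : ‖x‖ = 1) (he : ‖e‖ = 1) :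
    ‖x - ⟪x, e⟫ • e‖ = sin (angle x e) := by
  have hc : ⟪x, e⟫ = cos (angle x e) := by rw [cos_angle, hx, he, one_mul, div_one]
  have hsq : ‖x - ⟪x, e⟫ • e‖ ^ 2 = sin (angle x e) ^ 2 := by
    rw [norm_sub_sq_real, real_inner_smul_right, norm_smul, he, hx, hc, sin_sq,
      Real.norm_eq_abs, mul_one, sq_abs]
    ring
  exact (pow_left_inj₀ (norm_nonneg _) (sin_angle_nonneg x e) two_ne_zero).1 hsq

lemma inner_unitRejection_right (hx : ‖x‖ = 1) (he : ‖e‖ = 1) :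
    ⟪x, unitRejection e x⟫ = sin (angle x e) := by
  have hxx : ⟪x, x⟫ = 1 := by rw [real_inner_self_eq_norm_sq, hx, one_pow]
  have hc : ⟪x, e⟫ = cos (angle x e) := by rw [cos_angle, hx, he, one_mul, div_one]
  rw [unitRejection, real_inner_smul_right, inner_sub_right, real_inner_smul_right, hxx,
    norm_sub_inner_smul_eq_sin_angle hx he, hc, ← sq, ← sin_sq, sq, ← mul_assoc]
  rcases eq_or_ne (sin (angle x e)) 0 with h | h
  · simp [h]
  · rw [inv_mul_cancel₀ h, one_mul]

lemma norm_unitRejection (hx : ‖x‖ = 1) (he : ‖e‖ = 1) (h0 : 0 < angle x e)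
    (hπ : angle x e < π) : ‖unitRejection e x‖ = 1 := by
  have hsin : 0 < ‖x - ⟪x, e⟫ • e‖ := by
    rw [norm_sub_inner_smul_eq_sin_angle hx he]
    exact sin_pos_of_pos_of_lt_pi h0 hπ
  rw [unitRejection, norm_smul, norm_inv, norm_norm, inv_mul_cancel₀ hsin.ne']

lemma inner_cos_smul_add_sin_smul_unitRejection (hx : ‖x‖ = 1) (he : ‖e‖ = 1) (θ : ℝ) :
    ⟪x, cos θ • e + sin θ • unitRejection e x⟫ = cos (angle x e - θ) := by
  rw [inner_add_right, real_inner_smul_right, real_inner_smul_right,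
    inner_unitRejection_right hx he, ← cos_angle_mul_norm_mul_norm, hx, he, cos_sub]
  ring

lemma norm_cos_smul_add_sin_smul_unitRejection (hx : ‖x‖ = 1) (he : ‖e‖ = 1)
    (h0 : 0 < angle x e) (hπ : angle x e < π) (θ : ℝ) :
    ‖cos θ • e + sin θ • unitRejection e x‖ = 1 := by
  have hsq : ‖cos θ • e + sin θ • unitRejection e x‖ ^ 2 = 1 := by
    rw [norm_add_sq_real, real_inner_smul_left, real_inner_smul_right,
      inner_unitRejection_left he, norm_smul, norm_smul, he,
      norm_unitRejection hx he h0 hπ, Real.norm_eq_abs, Real.norm_eq_abs]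
    simp only [mul_one, mul_zero, add_zero, sq_abs, cos_sq_add_sin_sq]
  exact (pow_eq_one_iff_of_nonneg (norm_nonneg _) two_ne_zero).1 hsq

lemma abs_sub_bend_le {δ α : ℝ} (hδ₀ : 0 ≤ δ) (hδ : δ < π / 2) (h₁ : δ ≤ α) (h₂ : α ≤ π - δ) :
    |α - π / (π - 2 * δ) * (α - δ)| ≤ δ := by
  have hden : 0 < π - 2 * δ := by linarith
  have key : (α - π / (π - 2 * δ) * (α - δ)) * (π - 2 * δ) = δ * (π - 2 * α) := by
    field_simp
    ring
  -- `|π - 2α| ≤ π - 2δ`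
  rw [abs_le]
  constructor
  · nlinarith [mul_nonneg hδ₀ (sub_nonneg.2 h₂)]
  · nlinarith [mul_nonneg hδ₀ (sub_nonneg.2 h₁)]

end Bending

section RayDir

open Real RealInnerProductSpace InnerProductGeometry

variable {s : ℕ} {δ : ℝ} {x : EuclideanSpace ℝ (Fin s)}

lemma norm_e1 (hs : 0 < s) : ‖e1 s‖ = 1 := by
  simp [e1, hs]

lemma rayDir_of_lt (h₁ : δ < angle x (e1 s)) (h₂ : δ < angle x (-e1 s)) :
    rayDir s δ x = cos (π / (π - 2 * δ) * (angle x (e1 s) - δ)) • e1 s +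
      sin (π / (π - 2 * δ) * (angle x (e1 s) - δ)) • unitRejection (e1 s) x := by
  rw [rayDir, if_neg h₁.not_ge, if_neg h₂.not_ge]
  rfl

lemma norm_rayDir (hs : 0 < s) (hδ : 0 ≤ δ) (hx : ‖x‖ = 1) : ‖rayDir s δ x‖ = 1 := by
  have he := norm_e1 hs
  rcases le_or_gt (angle x (e1 s)) δ with h₁ | h₁
  · rwa [rayDir, if_pos h₁]
  rcases le_or_gt (angle x (-e1 s)) δ with h₂ | h₂
  · rwa [rayDir, if_neg h₁.not_ge, if_pos h₂, norm_neg]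
  rw [angle_neg_right] at h₂
  rw [rayDir_of_lt h₁ (by rwa [angle_neg_right])]
  exact norm_cos_smul_add_sin_smul_unitRejection hx he (by linarith) (by linarith) _

lemma cos_le_inner_rayDir (hs : 0 < s) (hδ₀ : 0 ≤ δ) (hδ : δ < π / 2) (hx : ‖x‖ = 1) :
    cos δ ≤ ⟪x, rayDir s δ x⟫ := by
  have he := norm_e1 hs
  have hδπ : δ ≤ π := by linarith [pi_pos]
  rcases le_or_gt (angle x (e1 s)) δ with h₁ | h₁
  · rw [rayDir, if_pos h₁]
    exact cos_le_inner_of_angle_le hx he hδπ h₁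
  rcases le_or_gt (angle x (-e1 s)) δ with h₂ | h₂
  · rw [rayDir, if_neg h₁.not_ge, if_pos h₂]
    exact cos_le_inner_of_angle_le hx (by rwa [norm_neg]) hδπ h₂
  rw [angle_neg_right] at h₂
  rw [rayDir_of_lt h₁ (by rwa [angle_neg_right]), inner_cos_smul_add_sin_smul_unitRejection hx he]
  exact (cos_le_cos_of_nonneg_of_le_pi (abs_nonneg _) hδπ
    (abs_sub_bend_le hδ₀ hδ h₁.le (by linarith))).trans_eq (cos_abs _)

end RayDir

section Ray

open RealInnerProductSpace

variable {E : Type*} [NormedAddCommGroup E] [InnerProductSpace ℝ E]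

lemma sub_mul_inner_le_norm_add_smul_sub {p d : E} (hp : ‖p‖ ≤ 1) (hd : ‖d‖ = 1)
    (hc : 0 ≤ ⟪p, d⟫) {t u : ℝ} (hu : 0 ≤ u) (hut : u ≤ t) :
    (t - u) * ⟪p, d⟫ ≤ ‖p + t • d‖ - ‖p + u • d‖ := by
  have hc₁ : ⟪p, d⟫ ≤ 1 := by
    have := real_inner_le_norm p d
    rw [hd, mul_one] at this
    linarith
  have norm_sq (r : ℝ) : ‖p + r • d‖ ^ 2 = ‖p‖ ^ 2 + 2 * r * ⟪p, d⟫ + r ^ 2 := by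
    rw [norm_add_sq_real, real_inner_smul_right, norm_smul, hd, Real.norm_eq_abs, mul_one,
      sq_abs]
    ring
  have norm_le (r : ℝ) (hr : 0 ≤ r) : ‖p + r • d‖ ≤ 1 + r := by
    nlinarith [norm_sq r, norm_nonneg (p + r • d), norm_nonneg p]
  set X := ‖p + t • d‖
  set Y := ‖p + u • d‖
  have hdiff : (X + Y) * (X - Y) = (t - u) * (2 * ⟪p, d⟫ + t + u) := by
    linear_combination norm_sq t - norm_sq u
  have hX := norm_le t (hu.trans hut)
  have hY := norm_le u hu
  -- `(X + Y) ⟪p, d⟫ ≤ (2 + t + u) ⟪p, d⟫ ≤ 2 ⟪p, d⟫ + t + u`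
  have hmul : (X + Y) * ((t - u) * ⟪p, d⟫) ≤ (X + Y) * (X - Y) := by
    rw [hdiff]
    nlinarith [mul_nonneg (sub_nonneg.2 hut) hc, mul_nonneg (sub_nonneg.2 hut) (sub_nonneg.2 hc₁)]
  rcases (mul_nonneg (sub_nonneg.2 hut) hc).eq_or_lt with h₀ | hpos
  · rw [← h₀, sub_nonneg]
    nlinarith [norm_nonneg (p + t • d), norm_nonneg (p + u • d)]
  · have hXY : 0 < X + Y := by
      nlinarith [norm_sq t, norm_nonneg (p + t • d), norm_nonneg (p + u • d)]
    exact le_of_mul_le_mul_left hmul hXY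

end Ray

lemma harm_succ (m : ℕ) : harm (m + 1) = harm m + 1 / (m + 1) := by
  rw [harm, harm, Finset.sum_range_succ]

lemma one_div_cos_le_sqrt_two {δ : ℝ} (hδ : |δ| ≤ Real.pi / 4) : 1 / Real.cos δ ≤ Real.sqrt 2 := by
  have hcos : Real.sqrt 2 / 2 ≤ Real.cos δ := by
    rw [← Real.cos_abs, ← Real.cos_pi_div_four]
    exact Real.cos_le_cos_of_nonneg_of_le_pi (abs_nonneg δ) (by linarith [Real.pi_pos]) hδ
  have hsqrt : Real.sqrt 2 * Real.sqrt 2 = 2 := Real.mul_self_sqrt zero_le_two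
  rw [div_le_iff₀ (hcos.trans_lt' (by positivity))]
  nlinarith [Real.sqrt_nonneg 2]

theorem stmt17_general (s : ℕ) (δ : ℝ) (hδ0 : 0 < δ) (hδ : δ < Real.pi / 4)
    (m : ℕ) (x y : EuclideanSpace ℝ (Fin s))
    (hx : harm m ≤ ‖x‖) (hx' : ‖x‖ < harm (m + 1))
    (x' : EuclideanSpace ℝ (Fin s)) (hx'' : ‖x'‖ = 1)
    (hxray : x ∈ ray s δ x') (hyray : y ∈ ray s δ x') (hy : ‖y‖ = harm m) :
    ‖y - x‖ ≤ (1 / Real.cos δ) * (1 / (m + 1)) ∧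
    (1 / Real.cos δ) * (1 / (m + 1)) ≤ Real.sqrt 2 / (m + 1) := by
  obtain ⟨t, ht, rfl⟩ := hxray
  obtain ⟨u, hu, rfl⟩ := hyray
  have hs : 0 < s := Nat.pos_of_ne_zero <| by
    rintro rfl
    simp [Subsingleton.elim x' 0] at hx''
  have hδπ : δ < Real.pi / 2 := by linarith
  have hd := norm_rayDir hs hδ0.le hx''
  have hcos_le := cos_le_inner_rayDir hs hδ0.le hδπ hx''
  have hcos : 0 < Real.cos δ := Real.cos_pos_of_mem_Ioo ⟨by linarith, hδπ⟩
  have hc : 0 < inner ℝ x' (rayDir s δ x') := hcos.trans_le hcos_le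
  have hut : u ≤ t := by
    by_contra! htu
    have := sub_mul_inner_le_norm_add_smul_sub hx''.le hd hc.le ht htu.le
    linarith [mul_pos (sub_pos.2 htu) hc]
  have hdist : ‖(x' + u • rayDir s δ x') - (x' + t • rayDir s δ x')‖ = t - u := by
    rw [add_sub_add_left_eq_sub, ← sub_smul, norm_smul, hd, mul_one,
      Real.norm_of_nonpos (by linarith), neg_sub]
  refine ⟨?_, ?_⟩
  · rw [hdist, one_div_mul_eq_div, le_div_iff₀ hcos]
    calc (t - u) * Real.cos δ ≤ (t - u) * inner ℝ x' (rayDir s δ x') :=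
          mul_le_mul_of_nonneg_left hcos_le (sub_nonneg.2 hut)
      _ ≤ 1 / (m + 1) := by
        linarith [sub_mul_inner_le_norm_add_smul_sub hx''.le hd hc.le hu hut, harm_succ m]
  · rw [div_eq_mul_one_div (Real.sqrt 2)]
    have hδ_abs : |δ| ≤ Real.pi / 4 := by rw [abs_of_pos hδ0]; exact hδ.le
    exact mul_le_mul_of_nonneg_right (one_div_cos_le_sqrt_two hδ_abs) (by positivity)

/-- If aₘ ≤ ‖x‖ < a_{m+1} and y is the intersection of the sphere of radius aₘ
with the ray of the family L through x, then |y − x| ≤ (1/cos δ)(1/(m+1)) ≤ √2/(m+1). -/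
theorem stmt17 (s : ℕ) (hs : 2 ≤ s) (δ : ℝ) (hδ0 : 0 < δ) (hδ : δ < Real.pi / 4)
    (m : ℕ) (hm : 1 ≤ m) (x y : EuclideanSpace ℝ (Fin s))
    (hx : harm m ≤ ‖x‖) (hx' : ‖x‖ < harm (m + 1))
    (x' : EuclideanSpace ℝ (Fin s)) (hx'' : ‖x'‖ = 1)
    (hxray : x ∈ ray s δ x') (hyray : y ∈ ray s δ x') (hy : ‖y‖ = harm m) :
    ‖y - x‖ ≤ (1 / Real.cos δ) * (1 / (m + 1)) ∧
    (1 / Real.cos δ) * (1 / (m + 1)) ≤ Real.sqrt 2 / (m + 1) :=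
  stmt17_general s δ hδ0 hδ m x y hx hx' x' hx'' hxray hyray hy
end
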